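/- If X is a regular simplicial set of dimension q (every simplex of degree > q is degenerate), then the internal hom Hom(Δ^n, X) has dimension at most (n+1)·q: every simplex of Hom(Δ^n, X) of degree greater than (n+1)·q is degenerate. -/

import Mathlib

open CategoryTheory Simplicial MonoidalCategory SSet Limits

universe u v

/-- A simplex is degenerate if it is the image of a degeneracy map. -/
def SDeg (X : SSet.{u}) : ∀ {n : ℕ}, X _⦋n⦌ → Prop := fun {n} x => match n, x with
  | 0, _ => False
  | n + 1, x => ∃ (i : Fin (n + 1)) (y : X _⦋n⦌), x = X.map (SimplexCategory.σ i).op y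

/-- The `i`-th elementary edge `X(φ(i,i+1))(x)` of a `p`-simplex `x`. -/
def elemEdge (X : SSet.{u}) {p : ℕ} (x : X _⦋p⦌) (i : Fin p) : X _⦋1⦌ :=
  X.map (SimplexCategory.mkOfLe i.castSucc i.succ (Fin.castSucc_lt_succ (i := i)).le).op x

/-- A simplicial set is regular (property `P_1`) if any simplex with a degenerate
`i`-th elementary edge is an `i`-th degeneracy. -/
def SReg (X : SSet.{u}) : Prop :=
  ∀ (p : ℕ) (x : X _⦋p + 1⦌) (i : Fin (p + 1)),
    SDeg X (elemEdge X x i) → ∃ y : X _⦋p⦌, x = X.map (SimplexCategory.σ i).op y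

/-- The internal hom of simplicial sets: its `p`-simplices are the
simplicial maps `Δ[p] ⊗ U ⟶ X`. -/
noncomputable def sHom (U X : SSet.{u}) : SSet.{u} where
  obj m := SSet.stdSimplex.obj m.unop ⊗ U ⟶ X
  map φ := TypeCat.ofHom fun f => (SSet.stdSimplex.map φ.unop ▷ U) ≫ f
  map_id m := by
    apply ConcreteCategory.hom_ext; intro f
    simp only [unop_id]; rw [(SSet.stdSimplex).map_id]; simp
  map_comp φ ψ := by
    apply ConcreteCategory.hom_ext; intro f
    simp only [unop_comp]
    rw [(SSet.stdSimplex).map_comp]; simp [MonoidalCategory.comp_whiskerRight]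

/-!
An `m`-simplex of `X` has at most `q` non-degenerate elementary edges: a degeneracy `s_k y` has
a degenerate `k`-th edge and otherwise the edges of `y`, reindexed by `k.succAbove`.
A `(p+1)`-simplex of `Hom(Δ[n], X)` is a map `f : Δ[p+1] ⊗ Δ[n] ⟶ X`, and its `n + 1` rows
`f(-, j)` have at most `(n+1)q < p+1` non-degenerate edges altogether, so some edge `i → i+1` is
degenerate in every row. By regularity, `f(α, β)` is unchanged when a value `i+1` of `α` at
position `a` is lowered to `i`: the two simplices are the faces `d_a x`, `d_{a+1} x` of an
`(m+1)`-simplex `x` whose `a`-th edge is such a row edge (or constant), so `x = s_a y`.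
Lowering the values one position at a time gives `f = (σ_i δ_{i+1} ▷ Δ[n]) ≫ f`, which exhibits
`f` as the degeneracy `s_i` of `(δ_{i+1} ▷ Δ[n]) ≫ f`.
-/

open SimplexCategory Opposite Finset

lemma Fin.val_succAbove_eq_ite {n : ℕ} (k : Fin (n + 1)) (t : Fin n) :
    (k.succAbove t : ℕ) = if (t : ℕ) < k then (t : ℕ) else (t : ℕ) + 1 := by
  rcases lt_or_ge t.castSucc k with h | h
  · rw [Fin.succAbove_of_castSucc_lt _ _ h, Fin.val_castSucc,
      if_pos (by simpa [Fin.lt_def] using h)]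
  · rw [Fin.succAbove_of_le_castSucc _ _ h, Fin.val_succ,
      if_neg (by simpa [Fin.le_def] using h)]

namespace SimplexCategory

lemma val_σ_apply {m : ℕ} (k : Fin (m + 1)) (t : Fin (m + 2)) :
    ((σ k).toOrderHom t : ℕ) = if (t : ℕ) ≤ k then (t : ℕ) else (t : ℕ) - 1 := by
  change (k.predAbove t : ℕ) = _
  rcases le_or_gt t k.castSucc with h | h
  · rw [Fin.predAbove_of_le_castSucc _ _ h, Fin.coe_castPred,
      if_pos (by simpa [Fin.le_def] using h)]
  · rw [Fin.predAbove_of_castSucc_lt _ _ h, Fin.val_pred,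
      if_neg (by simpa [Fin.lt_def] using h)]

lemma val_δ_apply {m : ℕ} (k : Fin (m + 2)) (t : Fin (m + 1)) :
    ((δ k).toOrderHom t : ℕ) = if (t : ℕ) < k then (t : ℕ) else (t : ℕ) + 1 :=
  Fin.val_succAbove_eq_ite k t

lemma mkOfSucc_comp_σ_self {m : ℕ} (k : Fin (m + 1)) :
    mkOfSucc k ≫ σ k = const ⦋1⦌ ⦋m⦌ k := by
  refine Hom.ext_one_left _ _ (Fin.ext ?_) (Fin.ext ?_) <;>
    simp [val_σ_apply]

lemma mkOfSucc_succAbove_comp_σ {m : ℕ} (k : Fin (m + 1)) (j : Fin m) :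
    mkOfSucc (k.succAbove j) ≫ σ k = mkOfSucc j := by
  refine Hom.ext_one_left _ _ (Fin.ext ?_) (Fin.ext ?_)
  · change ((σ k).toOrderHom (k.succAbove j).castSucc : ℕ) = j.castSucc
    rw [val_σ_apply, Fin.val_castSucc, Fin.val_castSucc, Fin.val_succAbove_eq_ite]
    split_ifs <;> omega
  · change ((σ k).toOrderHom (k.succAbove j).succ : ℕ) = j.succ
    rw [val_σ_apply, Fin.val_succ, Fin.val_succ, Fin.val_succAbove_eq_ite]
    split_ifs <;> omega

lemma σ_comp_δ_succ_apply_le {m : ℕ} (i : Fin (m + 1)) (t : Fin (m + 2)) :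
    (σ i ≫ δ i.succ).toOrderHom t ≤ t := by
  change ((δ i.succ).toOrderHom ((σ i).toOrderHom t) : ℕ) ≤ t
  rw [val_δ_apply, val_σ_apply, Fin.val_succ]
  split_ifs <;> omega

lemma σ_comp_δ_succ_apply_of_ne {m : ℕ} (i : Fin (m + 1)) {t : Fin (m + 2)} (ht : t ≠ i.succ) :
    (σ i ≫ δ i.succ).toOrderHom t = t := by
  have ht' : (t : ℕ) ≠ i + 1 := fun h => ht (Fin.ext (by simpa using h))
  refine Fin.ext ?_
  change ((δ i.succ).toOrderHom ((σ i).toOrderHom t) : ℕ) = t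
  rw [val_δ_apply, val_σ_apply, Fin.val_succ]
  split_ifs <;> omega

lemma σ_comp_δ_succ_apply_succ {m : ℕ} (i : Fin (m + 1)) :
    (σ i ≫ δ i.succ).toOrderHom i.succ = i.castSucc := by
  refine Fin.ext ?_
  change ((δ i.succ).toOrderHom ((σ i).toOrderHom i.succ) : ℕ) = i
  rw [val_δ_apply, val_σ_apply, Fin.val_succ]
  split_ifs <;> omega

def piecewiseHom {m k : ℕ} (g h : ⦋m⦌ ⟶ ⦋k⦌) (hgh : ∀ t, g.toOrderHom t ≤ h.toOrderHom t)
    (c : ℕ) : ⦋m⦌ ⟶ ⦋k⦌ :=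
  mkHom ⟨fun t => if (t : ℕ) < c then g.toOrderHom t else h.toOrderHom t, by
    intro t t' htt'
    dsimp only
    split_ifs with ht ht' ht'
    · exact g.toOrderHom.monotone htt'
    · exact (hgh t).trans (h.toOrderHom.monotone htt')
    · exact absurd (lt_of_le_of_lt (Fin.le_def.1 htt') ht') ht
    · exact h.toOrderHom.monotone htt'⟩

section piecewiseHom

variable {m k : ℕ} (g h : ⦋m⦌ ⟶ ⦋k⦌) (hgh : ∀ t, g.toOrderHom t ≤ h.toOrderHom t)

lemma piecewiseHom_apply (c : ℕ) (t : Fin (m + 1)) :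
    (piecewiseHom g h hgh c).toOrderHom t =
      if (t : ℕ) < c then g.toOrderHom t else h.toOrderHom t :=
  rfl

lemma piecewiseHom_zero : piecewiseHom g h hgh 0 = h := by
  ext t : 3
  simp [piecewiseHom_apply]

lemma piecewiseHom_of_le {c : ℕ} (hc : m + 1 ≤ c) : piecewiseHom g h hgh c = g := by
  ext t : 3
  have ht : (t : ℕ) < m + 1 := t.2
  simp [piecewiseHom_apply, show (t : ℕ) < c by omega]

lemma comp_piecewiseHom_σ_comp_apply {m' : ℕ} (φ : ⦋m'⦌ ⟶ ⦋m + 1⦌) (a : Fin (m + 1)) (c : ℕ)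
    (t : Fin (m' + 1)) :
    (φ ≫ piecewiseHom (σ a ≫ g) (σ a ≫ h) (fun _ => hgh _) c).toOrderHom t =
      if (φ.toOrderHom t : ℕ) < c then g.toOrderHom ((φ ≫ σ a).toOrderHom t)
      else h.toOrderHom ((φ ≫ σ a).toOrderHom t) :=
  rfl

lemma δ_castSucc_comp_piecewiseHom (a : Fin (m + 1)) :
    δ a.castSucc ≫ piecewiseHom (σ a ≫ g) (σ a ≫ h) (fun _ => hgh _) (a + 1) =
      piecewiseHom g h hgh a := by
  ext t : 3
  rw [comp_piecewiseHom_σ_comp_apply, δ_comp_σ_self, val_δ_apply, Fin.val_castSucc,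
    piecewiseHom_apply]
  split_ifs <;> first | rfl | omega

lemma δ_succ_comp_piecewiseHom (a : Fin (m + 1)) :
    δ a.succ ≫ piecewiseHom (σ a ≫ g) (σ a ≫ h) (fun _ => hgh _) (a + 1) =
      piecewiseHom g h hgh (a + 1) := by
  ext t : 3
  rw [comp_piecewiseHom_σ_comp_apply, δ_comp_σ_succ, val_δ_apply, Fin.val_succ,
    piecewiseHom_apply]
  split_ifs <;> first | rfl | omega

lemma mkOfSucc_comp_piecewiseHom (a : Fin (m + 1)) :
    mkOfSucc a ≫ piecewiseHom (σ a ≫ g) (σ a ≫ h) (fun _ => hgh _) (a + 1) =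
      mkOfLe (g.toOrderHom a) (h.toOrderHom a) (hgh a) := by
  refine Hom.ext_one_left _ _ ?_ ?_ <;>
    rw [comp_piecewiseHom_σ_comp_apply, mkOfSucc_comp_σ_self]
  · exact if_pos (show (a : ℕ) < a + 1 by omega)
  · exact if_neg (show ¬ (a : ℕ) + 1 < a + 1 by omega)

end piecewiseHom

end SimplexCategory

section Degenerate

variable {X : SSet.{u}}

lemma sdeg_map_const {m : ℕ} (x : X _⦋m⦌) (k : Fin (m + 1)) :
    SDeg X (X.map (const ⦋1⦌ ⦋m⦌ k).op x) :=
  ⟨0, X.map (const ⦋0⦌ ⦋m⦌ k).op x, by rw [← Functor.map_comp_apply, ← op_comp]; rfl⟩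

lemma elemEdge_map {m m' : ℕ} (g : ⦋m⦌ ⟶ ⦋m'⦌) (y : X _⦋m'⦌) (i : Fin m) :
    elemEdge X (X.map g.op y) i = X.map (mkOfSucc i ≫ g).op y := by
  rw [op_comp, Functor.map_comp_apply]
  rfl

lemma sdeg_elemEdge_map_σ_self {m : ℕ} (y : X _⦋m⦌) (k : Fin (m + 1)) :
    SDeg X (elemEdge X (X.map (σ k).op y) k) := by
  rw [elemEdge_map, mkOfSucc_comp_σ_self]
  exact sdeg_map_const y k

lemma elemEdge_map_σ_succAbove {m : ℕ} (y : X _⦋m⦌) (k : Fin (m + 1)) (j : Fin m) :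
    elemEdge X (X.map (σ k).op y) (k.succAbove j) = elemEdge X y j := by
  rw [elemEdge_map, mkOfSucc_succAbove_comp_σ]
  rfl

variable (X) in
open Classical in
noncomputable def nondegEdges {m : ℕ} (x : X _⦋m⦌) : Finset (Fin m) :=
  {i | ¬ SDeg X (elemEdge X x i)}

lemma mem_nondegEdges {m : ℕ} {x : X _⦋m⦌} {i : Fin m} :
    i ∈ nondegEdges X x ↔ ¬ SDeg X (elemEdge X x i) := by
  classical
  simp [nondegEdges]

lemma card_nondegEdges_map_σ_le {m : ℕ} (y : X _⦋m⦌) (k : Fin (m + 1)) :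
    #(nondegEdges X (X.map (σ k).op y)) ≤ #(nondegEdges X y) := by
  refine le_trans (Finset.card_le_card fun i hi => ?_) (Finset.card_map k.succAboveEmb).le
  rw [mem_nondegEdges] at hi
  obtain ⟨j, rfl⟩ := Fin.exists_succAbove_eq fun hik : i = k =>
    hi (hik ▸ sdeg_elemEdge_map_σ_self y k)
  rw [elemEdge_map_σ_succAbove] at hi
  exact Finset.mem_map_of_mem _ (mem_nondegEdges.2 hi)

lemma card_nondegEdges_le {q : ℕ} (hq : ∀ (m : ℕ) (x : X _⦋m + 1⦌), q < m + 1 → SDeg X x)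
    {m : ℕ} (x : X _⦋m⦌) : #(nondegEdges X x) ≤ q := by
  induction m with
  | zero => exact (Finset.card_le_univ _).trans (by simp)
  | succ m ih =>
    by_cases hm : m + 1 ≤ q
    · exact (Finset.card_le_univ _).trans (by simpa using hm)
    obtain ⟨k, y, rfl⟩ := hq m x (by omega)
    exact (card_nondegEdges_map_σ_le y k).trans (ih y)

lemma exists_forall_sdeg_elemEdge {q : ℕ}
    (hq : ∀ (m : ℕ) (x : X _⦋m + 1⦌), q < m + 1 → SDeg X x) {ι : Type*} [Fintype ι] {p : ℕ}
    (y : ι → X _⦋p⦌) (hp : Fintype.card ι * q < p) :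
    ∃ i : Fin p, ∀ j, SDeg X (elemEdge X (y j) i) := by
  classical
  have hcard : #(univ.biUnion fun j => nondegEdges X (y j)) < #(univ : Finset (Fin p)) :=
    calc _ ≤ ∑ j, #(nondegEdges X (y j)) := Finset.card_biUnion_le
      _ ≤ ∑ _j : ι, q := Finset.sum_le_sum fun j _ => card_nondegEdges_le hq (y j)
      _ < _ := by simpa using hp
  obtain ⟨i, -, hi⟩ := Finset.exists_mem_notMem_of_card_lt_card hcard
  exact ⟨i, fun j => not_not.1 fun hj =>
    hi (Finset.mem_biUnion.2 ⟨j, Finset.mem_univ _, mem_nondegEdges.2 hj⟩)⟩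

lemma SReg.map_δ_castSucc_eq_map_δ_succ (hX : SReg X) {m : ℕ} (x : X _⦋m + 1⦌) (a : Fin (m + 1))
    (ha : SDeg X (elemEdge X x a)) : X.map (δ a.castSucc).op x = X.map (δ a.succ).op x := by
  obtain ⟨y, rfl⟩ := hX m x a ha
  simp only [← Functor.map_comp_apply, ← op_comp, δ_comp_σ_self, δ_comp_σ_succ]

end Degenerate

section Tensor

variable {X : SSet.{u}} {p n : ℕ}

noncomputable def evalPair (f : Δ[p] ⊗ Δ[n] ⟶ X) {m : ℕ} (α : ⦋m⦌ ⟶ ⦋p⦌) (β : ⦋m⦌ ⟶ ⦋n⦌) :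
    X _⦋m⦌ :=
  f.app (op ⦋m⦌) (stdSimplex.objEquiv.symm α, stdSimplex.objEquiv.symm β)

lemma map_evalPair (f : Δ[p] ⊗ Δ[n] ⟶ X) {m m' : ℕ} (g : ⦋m'⦌ ⟶ ⦋m⦌) (α : ⦋m⦌ ⟶ ⦋p⦌)
    (β : ⦋m⦌ ⟶ ⦋n⦌) : X.map g.op (evalPair f α β) = evalPair f (g ≫ α) (g ≫ β) :=
  (NatTrans.naturality_apply f g.op _).symm

lemma elemEdge_evalPair (f : Δ[p] ⊗ Δ[n] ⟶ X) {m : ℕ} (α : ⦋m⦌ ⟶ ⦋p⦌) (β : ⦋m⦌ ⟶ ⦋n⦌)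
    (i : Fin m) : elemEdge X (evalPair f α β) i = evalPair f (mkOfSucc i ≫ α) (mkOfSucc i ≫ β) :=
  map_evalPair f (mkOfSucc i) α β

lemma sdeg_evalPair_const (f : Δ[p] ⊗ Δ[n] ⟶ X) (v : Fin (p + 1)) (j : Fin (n + 1)) :
    SDeg X (evalPair f (const ⦋1⦌ ⦋p⦌ v) (const ⦋1⦌ ⦋n⦌ j)) :=
  ⟨0, evalPair f (const ⦋0⦌ ⦋p⦌ v) (const ⦋0⦌ ⦋n⦌ j), by rw [map_evalPair]; rfl⟩

lemma evalPair_whiskerRight_comp (f : Δ[p] ⊗ Δ[n] ⟶ X) {p' : ℕ} (φ : ⦋p'⦌ ⟶ ⦋p⦌) {m : ℕ}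
    (α : ⦋m⦌ ⟶ ⦋p'⦌) (β : ⦋m⦌ ⟶ ⦋n⦌) :
    evalPair ((SSet.stdSimplex.map φ ▷ Δ[n]) ≫ f) α β = evalPair f (α ≫ φ) β :=
  rfl

lemma evalPair_ext {f g : Δ[p] ⊗ Δ[n] ⟶ X}
    (h : ∀ (m : ℕ) (α : ⦋m⦌ ⟶ ⦋p⦌) (β : ⦋m⦌ ⟶ ⦋n⦌), evalPair f α β = evalPair g α β) : f = g := by
  ext ⟨⟨m⟩⟩ ⟨α, β⟩
  exact h m (stdSimplex.objEquiv α) (stdSimplex.objEquiv β)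

end Tensor

lemma SReg.evalPair_comp_σ_comp_δ_succ {X : SSet.{u}} (hX : SReg X) {p n : ℕ}
    (f : Δ[p + 1] ⊗ Δ[n] ⟶ X) (i : Fin (p + 1))
    (H : ∀ j : Fin (n + 1), SDeg X (evalPair f (mkOfSucc i) (const ⦋1⦌ ⦋n⦌ j)))
    {m : ℕ} (α : ⦋m⦌ ⟶ ⦋p + 1⦌) (β : ⦋m⦌ ⟶ ⦋n⦌) :
    evalPair f (α ≫ σ i ≫ δ i.succ) β = evalPair f α β := by
  set r := σ i ≫ δ i.succ
  have hr : ∀ t, (α ≫ r).toOrderHom t ≤ α.toOrderHom t := fun t => σ_comp_δ_succ_apply_le i _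
  have step (a : Fin (m + 1)) : evalPair f (piecewiseHom (α ≫ r) α hr (a + 1)) β =
      evalPair f (piecewiseHom (α ≫ r) α hr a) β := by
    set x := evalPair f (piecewiseHom (σ a ≫ α ≫ r) (σ a ≫ α) (fun _ => hr _) (a + 1)) (σ a ≫ β)
    have hedge : SDeg X (elemEdge X x a) := by
      rw [elemEdge_evalPair, mkOfSucc_comp_piecewiseHom, ← Category.assoc (mkOfSucc a),
        mkOfSucc_comp_σ_self, SimplexCategory.const_comp]
      by_cases ha : α.toOrderHom a = i.succ
      · convert H (β.toOrderHom a) using 2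
        refine Hom.ext_one_left _ _ ?_ ha
        change r.toOrderHom (α.toOrderHom a) = i.castSucc
        rw [ha, σ_comp_δ_succ_apply_succ]
      · convert sdeg_evalPair_const f (α.toOrderHom a) (β.toOrderHom a) using 2
        refine Hom.ext_one_left _ _ (σ_comp_δ_succ_apply_of_ne i ha) rfl
    have := hX.map_δ_castSucc_eq_map_δ_succ x a hedge
    rwa [map_evalPair, map_evalPair, δ_castSucc_comp_piecewiseHom, δ_succ_comp_piecewiseHom,
      δ_comp_σ_self_assoc, δ_comp_σ_succ_assoc, eq_comm] at this
  have interpolate (c : ℕ) (hc : c ≤ m + 1) :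
      evalPair f (piecewiseHom (α ≫ r) α hr c) β = evalPair f α β := by
    induction c with
    | zero => rw [piecewiseHom_zero]
    | succ c ih => exact (step ⟨c, by omega⟩).trans (ih (by omega))
  rw [← interpolate (m + 1) le_rfl, piecewiseHom_of_le _ _ _ le_rfl]

/-- If `X` is regular of dimension `≤ q`, then `Hom(Δ[n], X)` has dimension
at most `(n+1)·q`. -/
theorem stmt_15 (X : SSet.{u}) (hX : SReg X) (q : ℕ)
    (hq : ∀ (m : ℕ) (x : X _⦋m + 1⦌), q < m + 1 → SDeg X x) (n : ℕ) :
    ∀ (p : ℕ) (f : (sHom Δ[n] X) _⦋p + 1⦌), (n + 1) * q < p + 1 →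
      SDeg (sHom Δ[n] X) f := by
  intro p f hpq
  change Δ[p + 1] ⊗ Δ[n] ⟶ X at f
  obtain ⟨i, hi⟩ := exists_forall_sdeg_elemEdge hq
    (fun j : Fin (n + 1) => evalPair f (𝟙 _) (const ⦋p + 1⦌ ⦋n⦌ j)) (by simpa using hpq)
  simp only [elemEdge_evalPair, Category.comp_id] at hi
  refine ⟨i, (SSet.stdSimplex.map (δ i.succ) ▷ Δ[n]) ≫ f, evalPair_ext fun m α β => ?_⟩
  change _ = evalPair ((SSet.stdSimplex.map (σ i) ▷ Δ[n]) ≫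
    (SSet.stdSimplex.map (δ i.succ) ▷ Δ[n]) ≫ f) α β
  rw [evalPair_whiskerRight_comp, evalPair_whiskerRight_comp, Category.assoc,
    hX.evalPair_comp_σ_comp_δ_succ f i hi]
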